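/- arXiv:2205.09260 — 10 statements merged into one kernel-verified Lean document; each statement's English description precedes it below -/
import Mathlib

section
/- Let (F, G, H) be an adjoint triple of additive functors between abelian categories A and B (F, H : A → B, G : B → A, with F ⊣ G and G ⊣ H). If H is an exact functor, then G sends projective objects of B to projective objects of A. Moreover, if in addition F is fully faithful and B has enough projective objects, then the class of projective objects of A equals add[G(Proj(B))], i.e., every projective object of A is a direct summand of an object of the form G(Q)^n with Q projective in B, and conversely every such direct summand is projective in A. -/
open CategoryTheory CategoryTheory.Limits

namespace Paper

variable {C : Type*} [Category C] [Abelian C]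

/-- A complete projective resolution: an acyclic ℤ-indexed complex of projectives
such that `Hom(P•, Q)` is exact for every projective `Q`. -/
structure IsCompleteProjectiveResolution (P : ChainComplex C ℤ) : Prop where
  projective : ∀ n : ℤ, Projective (P.X n)
  exactAt : ∀ n : ℤ, P.ExactAt n
  homExact : ∀ (Q : C), Projective Q → ∀ (n : ℤ) (f : P.X n ⟶ Q),
    P.d (n + 1) n ≫ f = 0 → ∃ g : P.X (n - 1) ⟶ Q, P.d n (n - 1) ≫ g = f

/-- An object is Gorenstein projective if it is isomorphic to `Im (P₀ ⟶ P₋₁)`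
for some complete projective resolution `P•`. -/
def IsGorensteinProjective (M : C) : Prop :=
  ∃ P : ChainComplex C ℤ, IsCompleteProjectiveResolution P ∧
    Nonempty (M ≅ Limits.image (P.d 0 (-1)))

variable {D : Type*} [Category D] [Abelian D]

/-- A functor is weak perfect if it sends every exact complex of projective
objects to an exact complex. -/
def WeakPerfect (F : C ⥤ D) [F.Additive] : Prop :=
  ∀ P : ChainComplex C ℤ, (∀ n : ℤ, Projective (P.X n)) → (∀ n : ℤ, P.ExactAt n) →
    ∀ n : ℤ, (((F.mapHomologicalComplex (ComplexShape.down ℤ)).obj P).ExactAt n)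

/-- Condition (SP2): for every complete projective resolution `P•` in the target
category and every projective `Q` in the source category, `Hom(P•, T Q)` is exact. -/
def SatisfiesSP2 (T : C ⥤ D) : Prop :=
  ∀ P : ChainComplex D ℤ, IsCompleteProjectiveResolution P →
    ∀ (Q : C), Projective Q → ∀ (n : ℤ) (f : P.X n ⟶ T.obj Q),
      P.d (n + 1) n ≫ f = 0 → ∃ g : P.X (n - 1) ⟶ T.obj Q, P.d n (n - 1) ≫ g = f

/-- `IsRelativeSyzygy P n A M` : there exists an exact sequence
`0 → A → X_{n-1} → ⋯ → X₀ → M → 0` with every `Xᵢ` satisfying `P`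
(defined by splicing short exact sequences). For `n = 0` it degenerates to `A ≅ M`. -/
def IsRelativeSyzygy (P : C → Prop) : ℕ → C → C → Prop
  | 0, A, M => Nonempty (A ≅ M)
  | n + 1, A, M => ∃ S : ShortComplex C, S.ShortExact ∧ P S.X₂ ∧
      Nonempty (S.X₃ ≅ M) ∧ IsRelativeSyzygy P n A S.X₁

/-- A resolving class of objects: contains all projectives, closed under direct
summands, and for any short exact sequence `0 → A → B → C → 0` with `C` in the class,
`A` is in the class iff `B` is. -/
structure IsResolving (X : Set C) : Prop where
  projective_mem : ∀ P : C, Projective P → P ∈ X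
  summand_mem : ∀ M ∈ X, ∀ (N : C) (s : N ⟶ M) (r : M ⟶ N), s ≫ r = 𝟙 N → N ∈ X
  two_of_three : ∀ S : ShortComplex C, S.ShortExact → S.X₃ ∈ X → (S.X₁ ∈ X ↔ S.X₂ ∈ X)

/-- `HasResolutionLength Y n M` : there is an exact sequence
`0 → P_n → ⋯ → P₀ → M → 0` with all `Pᵢ ∈ Y` (defined by splicing). -/
def HasResolutionLength (Y : Set C) : ℕ → C → Prop
  | 0, M => ∃ P ∈ Y, Nonempty (M ≅ P)
  | n + 1, M => ∃ S : ShortComplex C, S.ShortExact ∧ S.X₂ ∈ Y ∧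
      Nonempty (S.X₃ ≅ M) ∧ HasResolutionLength Y n S.X₁

/-- The `Y`-projective dimension of `M`, in `ℕ∞`. -/
noncomputable def pdim (Y : Set C) (M : C) : ℕ∞ :=
  sInf {n : ℕ∞ | ∃ m : ℕ, n = (m : ℕ∞) ∧ HasResolutionLength Y m M}

/-- The `Y`-global dimension of the ambient category. -/
noncomputable def gldim (Y : Set C) : ℕ∞ := ⨆ M : C, pdim Y M

/-- A recollement of abelian categories. -/
structure Recollement (A₁ A₀ A₂ : Type*)
    [Category A₁] [Category A₀] [Category A₂]
    [Abelian A₁] [Abelian A₀] [Abelian A₂] where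
  /-- `i^*` -/
  iStar : A₀ ⥤ A₁
  /-- `i_*` -/
  iPush : A₁ ⥤ A₀
  /-- `i^!` -/
  iShriek : A₀ ⥤ A₁
  /-- `j_!` -/
  jShriek : A₂ ⥤ A₀
  /-- `j^*` -/
  jStar : A₀ ⥤ A₂
  /-- `j_*` -/
  jPush : A₂ ⥤ A₀
  iStar_additive : iStar.Additive
  iPush_additive : iPush.Additive
  iShriek_additive : iShriek.Additive
  jShriek_additive : jShriek.Additive
  jStar_additive : jStar.Additive
  jPush_additive : jPush.Additive
  adj₁ : iStar ⊣ iPush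
  adj₂ : iPush ⊣ iShriek
  adj₃ : jShriek ⊣ jStar
  adj₄ : jStar ⊣ jPush
  iPush_full : iPush.Full
  iPush_faithful : iPush.Faithful
  jShriek_full : jShriek.Full
  jShriek_faithful : jShriek.Faithful
  jPush_full : jPush.Full
  jPush_faithful : jPush.Faithful
  essImage_iPush : ∀ X : A₀, iPush.essImage X ↔ Limits.IsZero (jStar.obj X)

end Paper

private lemma Paper.biproduct_projective {C : Type*} [Category C] [Abelian C]
    {J : Type} (g : J → C) [Limits.HasBiproduct g] (h : ∀ j, Projective (g j)) :
    Projective (⨁ g) := by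
  constructor
  intro E X f e he
  have hf : ∀ j : J, ∃ f' : g j ⟶ E, f' ≫ e = biproduct.ι g j ≫ f := by
    intro j
    haveI := h j
    exact Projective.factors (biproduct.ι g j ≫ f) e
  choose k hk using hf
  exact ⟨biproduct.desc k, by ext j; simp [hk]⟩

/-- In an adjoint triple `(F, G, H)` with `H` exact, `G` preserves
projective objects; if moreover `F` is fully faithful and `B` has enough projectives,
then `Proj(A) = add[G(Proj(B))]`. -/
theorem Paper.statement0
    {A B : Type*} [Category A] [Category B] [Abelian A] [Abelian B]
    [EnoughProjectives A] [EnoughInjectives A]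
    [EnoughProjectives B] [EnoughInjectives B]
    (F : A ⥤ B) (G : B ⥤ A) (H : A ⥤ B)
    [F.Additive] [G.Additive] [H.Additive]
    (adj₁ : F ⊣ G) (adj₂ : G ⊣ H)
    [PreservesFiniteLimits H] [PreservesFiniteColimits H] :
    haveI : HasFiniteBiproducts A := Abelian.hasFiniteBiproducts
    (∀ Q : B, Projective Q → Projective (G.obj Q)) ∧
    (F.Full → F.Faithful →
      ∀ P : A, Projective P ↔
        ∃ (Q : B) (n : ℕ) (s : P ⟶ ⨁ fun _ : Fin n => G.obj Q)
          (r : (⨁ fun _ : Fin n => G.obj Q) ⟶ P),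
          Projective Q ∧ s ≫ r = 𝟙 P) := by
  haveI : HasFiniteBiproducts A := Abelian.hasFiniteBiproducts
  haveI : PreservesColimitsOfSize.{0,0} G := adj₂.leftAdjoint_preservesColimits
  have hG : ∀ Q : B, Projective Q → Projective (G.obj Q) := fun Q hQ =>
    adj₂.map_projective Q hQ
  refine ⟨hG, fun hF1 hF2 P => ?_⟩
  constructor
  · intro hP
    haveI := hP
    haveI : Projective ((𝟭 A).obj P) := hP
    haveI : IsIso (adj₁.unit.app P) := inferInstance
    set Q := Projective.over (F.obj P) with hQdef
    haveI : Epi (G.map (Projective.π (F.obj P))) := inferInstance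
    obtain ⟨t, ht⟩ := Projective.factors (adj₁.unit.app P) (G.map (Projective.π (F.obj P)))
    refine ⟨Q, 1, t ≫ biproduct.lift (fun _ => 𝟙 (G.obj Q)),
      biproduct.π _ (0 : Fin 1) ≫ G.map (Projective.π (F.obj P)) ≫ inv (adj₁.unit.app P),
      Projective.projective_over _, ?_⟩
    simp only [Category.assoc, biproduct.lift_π_assoc, Category.id_comp]
    erw [Category.id_comp]
    rw [← Category.assoc, ht, IsIso.hom_inv_id]
  · rintro ⟨Q, n, s, r, hQ, hsr⟩
    haveI : Projective (⨁ fun _ : Fin n => G.obj Q) :=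
      Paper.biproduct_projective _ (fun _ => hG Q hQ)
    constructor
    intro E X f e he
    obtain ⟨g, hg⟩ := Projective.factors (r ≫ f) e
    exact ⟨s ≫ g, by rw [Category.assoc, hg, ← Category.assoc, hsr, Category.id_comp]⟩
end

section
/- Let (F, G, H) be an adjoint triple of additive functors between abelian categories A and B (F, H : A → B, G : B → A, with F ⊣ G and G ⊣ H). Then F sends projective objects of A to projective objects of B. Moreover, if G is fully faithful and A has enough projective objects, then the class of projective objects of B equals add[F(Proj(A))], i.e., every projective object of B is a direct summand of an object of the form F(P)^n with P projective in A, and conversely every such direct summand is projective in B. -/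
open CategoryTheory CategoryTheory.Limits

/-- In an adjoint triple `(F, G, H)`, `F` preserves projective objects;
if moreover `G` is fully faithful and `A` has enough projectives, then
`Proj(B) = add[F(Proj(A))]`. -/
theorem Paper.statement1
    {A B : Type*} [Category A] [Category B] [Abelian A] [Abelian B]
    [EnoughProjectives A] [EnoughInjectives A]
    [EnoughProjectives B] [EnoughInjectives B]
    (F : A ⥤ B) (G : B ⥤ A) (H : A ⥤ B)
    [F.Additive] [G.Additive] [H.Additive]
    (adj₁ : F ⊣ G) (adj₂ : G ⊣ H) :
    haveI : HasFiniteBiproducts B := Abelian.hasFiniteBiproducts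
    (∀ P : A, Projective P → Projective (F.obj P)) ∧
    (G.Full → G.Faithful →
      ∀ Q : B, Projective Q ↔
        ∃ (P : A) (n : ℕ) (s : Q ⟶ ⨁ fun _ : Fin n => F.obj P)
          (r : (⨁ fun _ : Fin n => F.obj P) ⟶ Q),
          Projective P ∧ s ≫ r = 𝟙 Q) := by
  haveI : HasFiniteBiproducts B := Abelian.hasFiniteBiproducts
  haveI : F.IsLeftAdjoint := ⟨G, ⟨adj₁⟩⟩
  haveI : G.IsLeftAdjoint := ⟨H, ⟨adj₂⟩⟩
  have h1 : ∀ P : A, Projective P → Projective (F.obj P) := fun P hP =>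
    adj₁.map_projective P hP
  refine ⟨h1, fun hFull hFaith Q => ?_⟩
  constructor
  · intro hQ
    haveI := hQ; haveI := hFull; haveI := hFaith
    haveI : IsIso (adj₁.counit.app Q) := inferInstance
    set P := Projective.over (G.obj Q) with hPdef
    set p : P ⟶ G.obj Q := Projective.π (G.obj Q)
    have hepi : Epi (F.map p ≫ adj₁.counit.app Q) := epi_comp _ _
    obtain ⟨s, hs⟩ := Projective.factors (𝟙 Q) (F.map p ≫ adj₁.counit.app Q)
    refine ⟨P, 1, biproduct.lift (fun _ => s),
      biproduct.π _ 0 ≫ (F.map p ≫ adj₁.counit.app Q), inferInstance, ?_⟩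
    rw [← Category.assoc, biproduct.lift_π, hs]
  · rintro ⟨P, n, s, r, hP, hsr⟩
    haveI := hP
    haveI : Projective (F.obj P) := h1 P hP
    haveI : Projective (⨁ fun _ : Fin n => F.obj P) := by
      constructor
      intro X Y f e he
      exact ⟨biproduct.desc fun b => Projective.factorThru (biproduct.ι (fun _ : Fin n => F.obj P) b ≫ f) e,
        by ext b; simp⟩
    constructor
    intro X Y f e he
    obtain ⟨g, hg⟩ := Projective.factors (r ≫ f) e
    exact ⟨s ≫ g, by rw [Category.assoc, hg, ← Category.assoc, hsr, Category.id_comp]⟩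
end

section
/- Let (F, G, H) be an adjoint triple of additive functors between abelian categories A and B (F, H : A → B, G : B → A, with F ⊣ G and G ⊣ H). If F is weak perfect (F sends every exact complex of projective objects of A to an exact complex) and G satisfies condition (SP2) (for every complete projective resolution P• in A and every projective object Q of B, the complex Hom_A(P•, G(Q)) is exact), then for every Gorenstein projective object Y of A, the object F(Y) is Gorenstein projective in B. -/
open CategoryTheory CategoryTheory.Limits

/-- In an adjoint triple `(F, G, H)` with `F` weak perfect and `G`
satisfying (SP2), `F` sends Gorenstein projective objects of `A` to Gorenstein
projective objects of `B`. -/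
theorem Paper.statement4
    {A B : Type*} [Category A] [Category B] [Abelian A] [Abelian B]
    [EnoughProjectives A] [EnoughInjectives A]
    [EnoughProjectives B] [EnoughInjectives B]
    (F : A ⥤ B) (G : B ⥤ A) (H : A ⥤ B)
    [F.Additive] [G.Additive] [H.Additive]
    (adj₁ : F ⊣ G) (adj₂ : G ⊣ H)
    (hF : WeakPerfect F) (hG : SatisfiesSP2 G)
    (Y : A) (hY : IsGorensteinProjective Y) :
    IsGorensteinProjective (F.obj Y) := by
  obtain ⟨P, hP, ⟨e⟩⟩ := hY
  have : G.IsLeftAdjoint := adj₂.isLeftAdjoint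
  have : F.IsLeftAdjoint := adj₁.isLeftAdjoint
  set FP := (F.mapHomologicalComplex (ComplexShape.down ℤ)).obj P with hFP
  have hFPd : ∀ i j : ℤ, FP.d i j = F.map (P.d i j) := fun i j => rfl
  -- the mapped complex is exact
  have hex : ∀ n : ℤ, FP.ExactAt n := hF P hP.projective hP.exactAt
  -- the mapped complex is a complete projective resolution
  have hcpr : IsCompleteProjectiveResolution FP := by
    refine ⟨fun n => adj₁.map_projective _ (hP.projective n), hex, ?_⟩
    intro Q hQ n f hf
    have hf' : P.d (n + 1) n ≫ (adj₁.homEquiv _ _) f = 0 := by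
      refine (adj₁.homEquiv_naturality_left _ _).symm.trans ?_
      change (adj₁.homEquiv _ _) (FP.d (n + 1) n ≫ f) = 0
      refine (congrArg (adj₁.homEquiv _ _) hf).trans ?_
      change (adj₁.homEquiv _ _) (0 : F.obj (P.X (n + 1)) ⟶ Q) = 0
      simp [Adjunction.homEquiv_apply]
    obtain ⟨g, hg⟩ := hG P hP Q hQ n ((adj₁.homEquiv _ _) f) hf'
    refine ⟨(adj₁.homEquiv _ _).symm g, ?_⟩
    have := Adjunction.homEquiv_naturality_left_symm adj₁ (P.d n (n - 1)) g
    rw [hg] at this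
    rw [hFPd]
    exact this.symm.trans (Equiv.symm_apply_apply _ _)
  -- the image of the mapped differential
  set eP : P.X 0 ⟶ Limits.image (P.d 0 (-1)) := Limits.factorThruImage _ with heP
  set mP : Limits.image (P.d 0 (-1)) ⟶ P.X (-1) := Limits.image.ι _ with hmP
  have hfac : eP ≫ mP = P.d 0 (-1) := Limits.image.fac _
  have hde : P.d 1 0 ≫ eP = 0 := by
    rw [← cancel_mono mP]
    simp [hfac]
  have hFfac : F.map eP ≫ F.map mP = FP.d 0 (-1) := by
    rw [← F.map_comp, hfac, hFPd]
  -- exactness of FP at 0 as a short complex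
  have hsc : (FP.sc' 1 0 (-1)).Exact := by
    rw [← HomologicalComplex.exactAt_iff' FP 1 0 (-1) (by simp) (by simp)]
    exact hex 0
  -- F.map mP is a monomorphism
  have hmono : Mono (F.map mP) := by
    refine Preadditive.mono_of_cancel_zero _ (fun {T} t ht => ?_)
    obtain ⟨T', π, hπ, x, hx⟩ :=
      surjective_up_to_refinements_of_epi (F.map eP) t
    have hx2 : x ≫ (FP.sc' 1 0 (-1)).g = 0 := by
      change x ≫ FP.d 0 (-1) = 0
      rw [← hFfac]
      exact (by rw [← Category.assoc, ← hx, Category.assoc, ht, comp_zero] : x ≫ F.map eP ≫ F.map mP = 0)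
    obtain ⟨T'', π', hπ', z, hz⟩ := hsc.exact_up_to_refinements x hx2
    haveI := hπ; haveI := hπ'
    have : π' ≫ π ≫ t = 0 := by
      rw [hx, ← Category.assoc, show π' ≫ x = z ≫ FP.d 1 0 from hz]
      change (z ≫ FP.d 1 0) ≫ F.map eP = 0
      exact (Category.assoc _ _ _).trans ((congrArg (fun k => z ≫ k) (by rw [← F.map_comp, hde, F.map_zero] : F.map (P.d 1 0) ≫ F.map eP = 0)).trans comp_zero)
    rw [← cancel_epi π, ← cancel_epi π']
    simpa using this
  have hsepi : StrongEpi (F.map eP) := strongEpi_of_epi _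
  refine ⟨FP, hcpr, ⟨F.mapIso e ≪≫ ?_⟩⟩
  haveI := hsepi; haveI := hmono
  exact Limits.image.isoStrongEpiMono (X := F.obj (P.X 0)) (Y := F.obj (P.X (-1))) (F.map eP) (F.map mP) hFfac
end

section
/- Let R(A', A, A'') be a recollement of abelian categories with functors i^*, i_*, i^!, j_!, j^*, j_*. If i^* is weak perfect (i^* sends every exact complex of projective objects of A to an exact complex) and i_* satisfies condition (SP2) (for every complete projective resolution P• in A and every projective object Q' of A', the complex Hom_A(P•, i_*(Q')) is exact), then for every Gorenstein projective object X of A, the object i^*(X) is Gorenstein projective in A'. -/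
open CategoryTheory CategoryTheory.Limits

/-- For an exact short complex, the cokernel of `f` is isomorphic to the image of `g`. -/
noncomputable def Paper.exactCokernelIsoImage {C : Type*} [Category C] [Abelian C]
    {S : ShortComplex C} (h : S.Exact) :
    cokernel S.f ≅ Limits.image S.g :=
  IsColimit.coconePointUniqueUpToIso (cokernelIsCokernel S.f) h.isColimitImage

/-- In a recollement `R(A', A, A'')`, if `i^*` is weak perfect and `i_*`
satisfies (SP2), then `i^*` sends Gorenstein projective objects of `A` to Gorenstein
projective objects of `A'`. -/
theorem Paper.statement6
    {A' A A'' : Type*} [Category A'] [Category A] [Category A'']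
    [Abelian A'] [Abelian A] [Abelian A'']
    [EnoughProjectives A'] [EnoughInjectives A']
    [EnoughProjectives A] [EnoughInjectives A]
    [EnoughProjectives A''] [EnoughInjectives A'']
    (R : Recollement A' A A'')
    (hw : haveI := R.iStar_additive; WeakPerfect R.iStar)
    (hsp : SatisfiesSP2 R.iPush)
    (X : A) (hX : IsGorensteinProjective X) :
    IsGorensteinProjective (R.iStar.obj X) := by
  classical
  haveI := R.iStar_additive
  haveI := R.iPush_additive
  haveI : PreservesColimits R.iStar := R.adj₁.leftAdjoint_preservesColimits
  haveI : PreservesColimits R.iPush := R.adj₂.leftAdjoint_preservesColimits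
  obtain ⟨P, hP, ⟨e⟩⟩ := hX
  set F := R.iStar with hF
  let FP : ChainComplex A' ℤ := (F.mapHomologicalComplex (ComplexShape.down ℤ)).obj P
  refine ⟨FP, ⟨?_, ?_, ?_⟩, ?_⟩
  · intro n
    exact R.adj₁.map_projective _ (hP.projective n)
  · intro n
    exact hw P hP.projective hP.exactAt n
  · intro Q hQ n f hf
    have hf' : F.map (P.d (n + 1) n) ≫ f = 0 := by
      exact hf
    have h0 : P.d (n + 1) n ≫ (R.adj₁.homEquiv _ _) f = 0 := by
      refine (R.adj₁.homEquiv_naturality_left (P.d (n + 1) n) f).symm.trans ?_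
      erw [hf']
      simp [Adjunction.homEquiv_apply]
    obtain ⟨g, hg⟩ := hsp P hP Q hQ n ((R.adj₁.homEquiv _ _) f) h0
    refine ⟨(R.adj₁.homEquiv _ _).symm g, ?_⟩
    have : F.map (P.d n (n - 1)) ≫ (R.adj₁.homEquiv _ _).symm g
        = (R.adj₁.homEquiv _ _).symm (P.d n (n - 1) ≫ g) :=
      (R.adj₁.homEquiv_naturality_left_symm _ _).symm
    show FP.d n (n - 1) ≫ _ = f
    have hd : FP.d n (n - 1) = F.map (P.d n (n - 1)) := rfl
    rw [hd]; exact this.trans (by rw [hg]; exact Equiv.symm_apply_apply _ _)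
  · -- the image isomorphism
    have hprev : (ComplexShape.down ℤ).prev (0 : ℤ) = 1 := by
      rw [ChainComplex.prev]; norm_num
    have hnext : (ComplexShape.down ℤ).next (0 : ℤ) = -1 := by
      rw [ChainComplex.next]
      norm_num
    have hexP : (P.sc' 1 0 (-1)).Exact :=
      (P.exactAt_iff' (i := 1) (j := 0) (k := -1) hprev hnext).mp (hP.exactAt 0)
    have hexFP : (FP.sc' 1 0 (-1)).Exact :=
      (FP.exactAt_iff' (i := 1) (j := 0) (k := -1) hprev hnext).mp (hw P hP.projective hP.exactAt 0)
    have iso₁ : cokernel (P.d 1 0) ≅ Limits.image (P.d 0 (-1)) :=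
      Paper.exactCokernelIsoImage hexP
    have iso₂ : cokernel (FP.d 1 0) ≅ Limits.image (FP.d 0 (-1)) :=
      Paper.exactCokernelIsoImage hexFP
    have iso₃ : F.obj (cokernel (P.d 1 0)) ≅ cokernel (F.map (P.d 1 0)) :=
      PreservesCokernel.iso F _
    have hd10 : FP.d 1 0 = F.map (P.d 1 0) := rfl
    exact ⟨F.mapIso e ≪≫ F.mapIso iso₁.symm ≪≫ iso₃ ≪≫ cokernelIsoOfEq hd10.symm ≪≫ iso₂⟩
end

section
/- Let R(A', A, A'') be a recollement of abelian categories with functors i^*, i_*, i^!, j_!, j^*, j_*. If j_! is weak perfect (j_! sends every exact complex of projective objects of A'' to an exact complex) and j^* satisfies condition (SP2) (for every complete projective resolution P• in A'' and every projective object Q of A, the complex Hom_{A''}(P•, j^*(Q)) is exact), then for every Gorenstein projective object X'' of A'', the object j_!(X'') is Gorenstein projective in A. -/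
open CategoryTheory CategoryTheory.Limits

namespace Paper

open CategoryTheory CategoryTheory.Limits

/-- If a short complex is exact, the image of its second map is a cokernel of the first. -/
noncomputable def exactImageIsoCokernel {C : Type*} [Category C] [Abelian C]
    {S : ShortComplex C} (h : S.Exact) :
    Limits.image S.g ≅ cokernel S.f :=
  IsColimit.coconePointUniqueUpToIso h.isColimitImage (colimit.isColimit (parallelPair S.f 0))

end Paper

/-- In a recollement `R(A', A, A'')`, if `j_!` is weak perfect and `j^*`
satisfies (SP2), then `j_!` sends Gorenstein projective objects of `A''` to
Gorenstein projective objects of `A`. -/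
theorem Paper.statement8
    {A' A A'' : Type*} [Category A'] [Category A] [Category A'']
    [Abelian A'] [Abelian A] [Abelian A'']
    [EnoughProjectives A'] [EnoughInjectives A']
    [EnoughProjectives A] [EnoughInjectives A]
    [EnoughProjectives A''] [EnoughInjectives A'']
    (R : Recollement A' A A'')
    (hw : haveI := R.jShriek_additive; WeakPerfect R.jShriek)
    (hsp : SatisfiesSP2 R.jStar)
    (X'' : A'') (hX'' : IsGorensteinProjective X'') :
    IsGorensteinProjective (R.jShriek.obj X'') := by
  haveI := R.jShriek_additive
  haveI := R.jStar_additive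
  haveI : R.jStar.IsLeftAdjoint := ⟨_, ⟨R.adj₄⟩⟩
  haveI := R.adj₃.leftAdjoint_preservesColimits
  obtain ⟨P, hP, ⟨e⟩⟩ := hX''
  let F := R.jShriek
  let Q := (F.mapHomologicalComplex (ComplexShape.down ℤ)).obj P
  refine ⟨Q, ⟨fun n => R.adj₃.map_projective _ (hP.projective n),
    fun n => hw P hP.projective hP.exactAt n, ?_⟩, ⟨?_⟩⟩
  · intro Q' hQ' n (f : F.obj (P.X n) ⟶ Q') hf
    have hf' : P.d (n + 1) n ≫ (R.adj₃.homEquiv _ _ f) = 0 := by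
      rw [← R.adj₃.homEquiv_naturality_left]
      have : Q.d (n + 1) n ≫ f = 0 := hf
      have hd : Q.d (n + 1) n = F.map (P.d (n + 1) n) := by
        rfl
      rw [hd] at this
      erw [this]
      erw [Adjunction.homEquiv_apply, Functor.map_zero, comp_zero]
    obtain ⟨g', hg'⟩ := hsp P hP Q' hQ' n (R.adj₃.homEquiv _ _ f) hf'
    refine ⟨(R.adj₃.homEquiv _ _).symm g', ?_⟩
    have : Q.d n (n - 1) = F.map (P.d n (n - 1)) := by rfl
    erw [this, ← R.adj₃.homEquiv_naturality_left_symm, hg']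
    exact Equiv.symm_apply_apply _ _
  · -- the isomorphism
    have hprev : (ComplexShape.down ℤ).prev 0 = 1 := by
      rw [ChainComplex.prev]; norm_num
    have hnext : (ComplexShape.down ℤ).next 0 = -1 := by
      rw [ChainComplex.next]; norm_num
    have hS : (P.sc' 1 0 (-1)).Exact :=
      (HomologicalComplex.exactAt_iff' P 1 0 (-1) hprev hnext).mp (hP.exactAt 0)
    have hSQ : (Q.sc' 1 0 (-1)).Exact :=
      (HomologicalComplex.exactAt_iff' Q 1 0 (-1) hprev hnext).mp
        (hw P hP.projective hP.exactAt 0)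
    have iso1 : Limits.image (P.d 0 (-1)) ≅ cokernel (P.d 1 0) :=
      exactImageIsoCokernel hS
    have iso2 : Limits.image (Q.d 0 (-1)) ≅ cokernel (Q.d 1 0) :=
      exactImageIsoCokernel hSQ
    have iso3 : F.obj (cokernel (P.d 1 0)) ≅ cokernel (F.map (P.d 1 0)) :=
      PreservesCokernel.iso F (P.d 1 0)
    have hd : Q.d 1 0 = F.map (P.d 1 0) := by rfl
    have iso4 : cokernel (F.map (P.d 1 0)) ≅ cokernel (Q.d 1 0) :=
      eqToIso (by rw [hd]; rfl)
    exact F.mapIso e ≪≫ F.mapIso iso1 ≪≫ iso3 ≪≫ iso4 ≪≫ iso2.symm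
end

section
/- Let R(A', A, A'') be a recollement of abelian categories with functors i^*, i_*, i^!, j_!, j^*, j_*, let n be a positive integer, and let A be an n-syzygy of M in A, i.e., there is an exact sequence 0 → A → P_{n-1} → ⋯ → P₀ → M → 0 with each P_i projective. (1) If j_* is exact, then j^*(A) is an n-syzygy of j^*(M) in A''. (2) If i^* is exact, then i^*(A) is an n-syzygy of i^*(M) in A'. -/
open CategoryTheory CategoryTheory.Limits

namespace Paper

lemma syzygy_map {C : Type*} [Category C] [Abelian C] {D : Type*} [Category D] [Abelian D]
    (F : C ⥤ D) [F.PreservesZeroMorphisms]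
    [PreservesFiniteLimits F] [PreservesFiniteColimits F]
    (hP : ∀ P : C, Projective P → Projective (F.obj P)) :
    ∀ (n : ℕ) (A M : C), IsRelativeSyzygy (fun P : C => Projective P) n A M →
      IsRelativeSyzygy (fun P : D => Projective P) n (F.obj A) (F.obj M)
  | 0, _, _, ⟨e⟩ => ⟨F.mapIso e⟩
  | n + 1, A, _, ⟨S, hS, hX₂, ⟨e⟩, hrec⟩ =>
      ⟨S.map F, hS.map_of_exact F, hP _ hX₂, ⟨F.mapIso e⟩,
        syzygy_map F hP n A S.X₁ hrec⟩

end Paper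

/-- In a recollement `R(A', A, A'')`, let `A₀` be an n-syzygy of `M`
(n ≥ 1). (1) If `j_*` is exact, then `j^* A₀` is an n-syzygy of `j^* M`.
(2) If `i^*` is exact, then `i^* A₀` is an n-syzygy of `i^* M`. -/
theorem Paper.statement10
    {A' A A'' : Type*} [Category A'] [Category A] [Category A'']
    [Abelian A'] [Abelian A] [Abelian A'']
    [EnoughProjectives A'] [EnoughInjectives A']
    [EnoughProjectives A] [EnoughInjectives A]
    [EnoughProjectives A''] [EnoughInjectives A'']
    (R : Recollement A' A A'')
    (n : ℕ) (hn : 0 < n) (A₀ M : A)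
    (h : IsRelativeSyzygy (fun P : A => Projective P) n A₀ M) :
    (∀ (_ : PreservesFiniteLimits R.jPush) (_ : PreservesFiniteColimits R.jPush),
        IsRelativeSyzygy (fun P : A'' => Projective P) n (R.jStar.obj A₀) (R.jStar.obj M)) ∧
    (∀ (_ : PreservesFiniteLimits R.iStar) (_ : PreservesFiniteColimits R.iStar),
        IsRelativeSyzygy (fun P : A' => Projective P) n (R.iStar.obj A₀) (R.iStar.obj M)) := by
  constructor
  · intro h1 h2
    haveI : R.jStar.Additive := R.jStar_additive
    haveI := R.adj₄.leftAdjoint_preservesColimits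
    haveI := R.adj₃.rightAdjoint_preservesLimits
    haveI : PreservesFiniteLimits R.jStar := inferInstance
    haveI : PreservesFiniteColimits R.jStar := inferInstance
    exact syzygy_map R.jStar (fun P hP => R.adj₄.map_projective P hP) n A₀ M h
  · intro h1 h2
    haveI : R.iStar.Additive := R.iStar_additive
    haveI := R.adj₂.leftAdjoint_preservesColimits
    exact syzygy_map R.iStar (fun P hP => R.adj₁.map_projective P hP) n A₀ M h
end

section
/- Let R(A', A, A'') be a recollement of abelian categories with functors i^*, i_*, i^!, j_!, j^*, j_*, and let X be a resolving subcategory of A. If i_*(i^*(X)) ⊆ X (i.e., i_* i^* M lies in X for every M in X), then i^* X, the full subcategory of A' consisting of objects isomorphic to i^*(M) for some M in X, is a resolving subcategory of A'. -/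
open CategoryTheory CategoryTheory.Limits

/-- In a recollement `R(A', A, A'')`, if `X` is resolving in `A` and
`i_* i^* X ⊆ X`, then `i^* X` is resolving in `A'`. -/
theorem Paper.statement12
    {A' A A'' : Type*} [Category A'] [Category A] [Category A'']
    [Abelian A'] [Abelian A] [Abelian A'']
    [EnoughProjectives A'] [EnoughInjectives A']
    [EnoughProjectives A] [EnoughInjectives A]
    [EnoughProjectives A''] [EnoughInjectives A'']
    (R : Recollement A' A A'')
    (X : Set A) (hX : IsResolving X)
    (h : ∀ M ∈ X, R.iPush.obj (R.iStar.obj M) ∈ X) :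
    IsResolving {Y : A' | ∃ M ∈ X, Nonempty (Y ≅ R.iStar.obj M)} := by
  
  haveI := R.iPush_full
  haveI := R.iPush_faithful
  haveI := R.iPush_additive
  haveI := R.iStar_additive
  haveI : PreservesColimitsOfSize.{0,0} R.iPush := R.adj₂.leftAdjoint_preservesColimits
  haveI : PreservesLimitsOfSize.{0,0} R.iPush := R.adj₁.rightAdjoint_preservesLimits
  haveI : PreservesColimitsOfSize.{0,0} R.iStar := R.adj₁.leftAdjoint_preservesColimits
  haveI : PreservesFiniteColimits R.iPush := ⟨fun _ _ _ => inferInstance⟩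
  haveI : PreservesFiniteLimits R.iPush := ⟨fun _ _ _ => inferInstance⟩
  haveI : PreservesFiniteColimits R.iStar := ⟨fun _ _ _ => inferInstance⟩
  -- X is closed under isomorphism
  have hXiso : ∀ {M N : A}, M ∈ X → (N ≅ M) → N ∈ X := fun hM e =>
    hX.summand_mem _ hM _ e.hom e.inv e.hom_inv_id
  -- key: membership in i^*X is detected by i_*
  have memIff : ∀ Y : A', (∃ M ∈ X, Nonempty (Y ≅ R.iStar.obj M)) ↔ R.iPush.obj Y ∈ X := by
    intro Y
    constructor
    · rintro ⟨M, hM, ⟨e⟩⟩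
      exact hXiso (h M hM) (R.iPush.mapIso e)
    · intro hY
      exact ⟨R.iPush.obj Y, hY, ⟨(asIso (R.adj₁.counit.app Y)).symm⟩⟩
  have summand : ∀ M' ∈ {Y : A' | ∃ M ∈ X, Nonempty (Y ≅ R.iStar.obj M)},
      ∀ (N : A') (s : N ⟶ M') (r : M' ⟶ N), s ≫ r = 𝟙 N →
      N ∈ {Y : A' | ∃ M ∈ X, Nonempty (Y ≅ R.iStar.obj M)} := by
    intro M' hM' N s r hsr
    simp only [Set.mem_setOf_eq, memIff] at hM' ⊢
    refine hX.summand_mem _ hM' _ (R.iPush.map s) (R.iPush.map r) ?_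
    rw [← R.iPush.map_comp, hsr, R.iPush.map_id]
  constructor
  · -- projectives
    intro P' hP'
    obtain ⟨P, hPproj, π, hπ⟩ : ∃ (P : A) (_ : Projective P) (π : P ⟶ R.iPush.obj P'),
        Epi π := ⟨Projective.over _, inferInstance, Projective.π _, inferInstance⟩
    have hepi1 : Epi (R.iStar.map π) := preserves_epi_of_preservesColimit R.iStar π
    have hepi : Epi (R.iStar.map π ≫ R.adj₁.counit.app P') := epi_comp _ _
    haveI := hP'
    exact summand (R.iStar.obj P) ⟨P, hX.projective_mem P hPproj, ⟨Iso.refl _⟩⟩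
      P' (Projective.factorThru (𝟙 P') (R.iStar.map π ≫ R.adj₁.counit.app P'))
      (R.iStar.map π ≫ R.adj₁.counit.app P') (Projective.factorThru_comp _ _)
  · exact summand
  · -- two of three
    intro S hS h3
    have hS' : (S.map R.iPush).ShortExact := hS.map_of_exact R.iPush
    have h3' : (S.map R.iPush).X₃ ∈ X := (memIff S.X₃).mp h3
    have := hX.two_of_three _ hS' h3'
    simp only [Set.mem_setOf_eq, memIff]
    exact this
end

section
/- Let R(A', A, A'') be a recollement of abelian categories with functors i^*, i_*, i^!, j_!, j^*, j_*, and suppose X' and X'' are resolving subcategories of A' and A'', respectively. If both i^* and j_* are exact, then the full subcategory X := {X ∈ A : i^*(X) ∈ X' and j^*(X) ∈ X''} is a resolving subcategory of A. -/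
open CategoryTheory CategoryTheory.Limits

/-- In a recollement `R(A', A, A'')` with `i^*` and `j_*` exact, if `X'`
and `X''` are resolving in `A'` and `A''`, then
`{X ∈ A | i^* X ∈ X' and j^* X ∈ X''}` is resolving in `A`. -/
theorem Paper.statement14
    {A' A A'' : Type*} [Category A'] [Category A] [Category A'']
    [Abelian A'] [Abelian A] [Abelian A'']
    [EnoughProjectives A'] [EnoughInjectives A']
    [EnoughProjectives A] [EnoughInjectives A]
    [EnoughProjectives A''] [EnoughInjectives A'']
    (R : Recollement A' A A'')
    (X' : Set A') (X'' : Set A'')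
    (hX' : IsResolving X') (hX'' : IsResolving X'')
    [PreservesFiniteLimits R.iStar] [PreservesFiniteColimits R.iStar]
    [PreservesFiniteLimits R.jPush] [PreservesFiniteColimits R.jPush] :
    IsResolving {M : A | R.iStar.obj M ∈ X' ∧ R.jStar.obj M ∈ X''} := by
  have := R.iStar_additive
  have := R.jStar_additive
  have hjL := R.adj₃.rightAdjoint_preservesLimits
  have hjC := R.adj₄.leftAdjoint_preservesColimits
  have hiC := R.adj₂.leftAdjoint_preservesColimits
  constructor
  · intro P hP
    constructor
    · exact hX'.projective_mem _ (R.adj₁.map_projective P hP)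
    · exact hX''.projective_mem _ (R.adj₄.map_projective P hP)
  · intro M hM N s r hsr
    constructor
    · exact hX'.summand_mem _ hM.1 _ (R.iStar.map s) (R.iStar.map r)
        (by rw [← R.iStar.map_comp, hsr, R.iStar.map_id])
    · exact hX''.summand_mem _ hM.2 _ (R.jStar.map s) (R.jStar.map r)
        (by rw [← R.jStar.map_comp, hsr, R.jStar.map_id])
  · intro S hS h3
    have h1 : (S.map R.iStar).ShortExact := hS.map_of_exact R.iStar
    have h2 : (S.map R.jStar).ShortExact := hS.map_of_exact R.jStar
    have e1 := hX'.two_of_three _ h1 h3.1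
    have e2 := hX''.two_of_three _ h2 h3.2
    constructor
    · rintro ⟨a, b⟩; exact ⟨e1.mp a, e2.mp b⟩
    · rintro ⟨a, b⟩; exact ⟨e1.mpr a, e2.mpr b⟩
end

section
/- Let R(A', A, A'') be a recollement of abelian categories with functors i^*, i_*, i^!, j_!, j^*, j_*, and let X be a resolving subcategory of A. Assume j_* is exact and j_!(j^*(X)) ⊆ X. Then: (1) for every object A'' of A'', pd_X(j_!(A'')) ≤ pd_{j^*X}(A'') + gl.dim_X(A') + 1; (2) gl.dim_X(A) ≤ gl.dim_X(A') + gl.dim_{j^*X}(A'') + 1 (inequalities in ℕ ∪ {∞}). -/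
open CategoryTheory CategoryTheory.Limits

namespace Paper

section Aux

open CategoryTheory CategoryTheory.Limits ZeroObject

variable {C : Type*} [Category C] [Abelian C]

/-- The kernel short complex of an epimorphism is short exact. -/
lemma kernelSES {P Q : C} (f : P ⟶ Q) [Epi f] :
    (ShortComplex.mk (kernel.ι f) f (kernel.condition f)).ShortExact :=
  ShortComplex.ShortExact.mk'
    (ShortComplex.exact_of_f_is_kernel _ (KernelFork.IsLimit.ofι' _ _
      (fun k hk => ⟨kernel.lift f k hk, kernel.lift_ι f k hk⟩)))
    inferInstance inferInstance

/-- C1-SA : pulling back a short exact sequence along any morphism `p : P ⟶ S.X₃`. -/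
lemma pullbackSES_left {S : ShortComplex C} (hS : S.ShortExact) {P : C} (p : P ⟶ S.X₃) :
    (ShortComplex.mk
      ((pullback.lift S.f (0 : S.X₁ ⟶ P) (by rw [S.zero, zero_comp])) : S.X₁ ⟶ pullback S.g p)
      (pullback.snd S.g p)
      (by simp [pullback.lift_fst, pullback.lift_snd, pullback.lift_fst_assoc, pullback.lift_snd_assoc])).ShortExact := by
  have := hS.mono_f
  have := hS.epi_g
  have hmono : Mono ((pullback.lift S.f (0 : S.X₁ ⟶ P) (by rw [S.zero, zero_comp])) :
      S.X₁ ⟶ pullback S.g p) := by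
    have : (pullback.lift S.f (0 : S.X₁ ⟶ P) (by rw [S.zero, zero_comp]) :
        S.X₁ ⟶ pullback S.g p) ≫ pullback.fst S.g p = S.f := by simp [pullback.lift_fst, pullback.lift_snd, pullback.lift_fst_assoc, pullback.lift_snd_assoc]
    exact mono_of_mono_fac this
  refine ShortComplex.ShortExact.mk' ?_ hmono inferInstance
  apply ShortComplex.exact_of_f_is_kernel
  exact KernelFork.IsLimit.ofι' _ _ (fun k hk => by
    refine ⟨hS.exact.lift (k ≫ pullback.fst S.g p) ?_, ?_⟩
    · rw [Category.assoc, pullback.condition, ← Category.assoc, hk, zero_comp]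
    · apply pullback.hom_ext
      · simp [pullback.lift_fst, pullback.lift_snd, pullback.lift_fst_assoc, pullback.lift_snd_assoc]
      · simp [hk, pullback.lift_fst, pullback.lift_snd, pullback.lift_fst_assoc, pullback.lift_snd_assoc])

/-- C1-SK : pulling back a short exact sequence along an epi `p : P ⟶ S.X₃`:
`0 → ker p → pullback → S.X₂ → 0` is short exact. -/
lemma pullbackSES_right {S : ShortComplex C} (hS : S.ShortExact) {P : C} (p : P ⟶ S.X₃) [Epi p] :
    (ShortComplex.mk
      ((pullback.lift (0 : kernel p ⟶ S.X₂) (kernel.ι p)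
        (by rw [zero_comp, kernel.condition])) : kernel p ⟶ pullback S.g p)
      (pullback.fst S.g p)
      (by simp [pullback.lift_fst, pullback.lift_snd, pullback.lift_fst_assoc, pullback.lift_snd_assoc])).ShortExact := by
  have := hS.epi_g
  have hmono : Mono ((pullback.lift (0 : kernel p ⟶ S.X₂) (kernel.ι p)
      (by rw [zero_comp, kernel.condition])) : kernel p ⟶ pullback S.g p) := by
    have : (pullback.lift (0 : kernel p ⟶ S.X₂) (kernel.ι p)
        (by rw [zero_comp, kernel.condition]) : kernel p ⟶ pullback S.g p) ≫ pullback.snd S.g p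
        = kernel.ι p := by simp [pullback.lift_fst, pullback.lift_snd, pullback.lift_fst_assoc, pullback.lift_snd_assoc]
    exact mono_of_mono_fac this
  refine ShortComplex.ShortExact.mk' ?_ hmono inferInstance
  apply ShortComplex.exact_of_f_is_kernel
  exact KernelFork.IsLimit.ofι' _ _ (fun k hk => by
    refine ⟨kernel.lift p (k ≫ pullback.snd S.g p) ?_, ?_⟩
    · rw [Category.assoc, ← pullback.condition, ← Category.assoc, hk, zero_comp]
    · apply pullback.hom_ext
      · simp [hk, pullback.lift_fst, pullback.lift_snd, pullback.lift_fst_assoc, pullback.lift_snd_assoc]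
      · simp [pullback.lift_fst, pullback.lift_snd, pullback.lift_fst_assoc, pullback.lift_snd_assoc])

/-- C1'' : quotient of an epi cover along the mono of a short exact sequence:
given short exact `T : 0 → K → E → B → 0` and an epi `q : Q ⟶ E`,
`0 → pullback q T.f → Q → B → 0` is short exact. -/
lemma pullbackSES_quot {T : ShortComplex C} (hT : T.ShortExact) {Q : C} (q : Q ⟶ T.X₂) [Epi q] :
    (ShortComplex.mk (pullback.fst q T.f) (q ≫ T.g)
      (by rw [← Category.assoc, pullback.condition, Category.assoc, T.zero, comp_zero])).ShortExact := by
  have := hT.mono_f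
  have := hT.epi_g
  have : Epi (q ≫ T.g) := epi_comp _ _
  refine ShortComplex.ShortExact.mk' ?_ inferInstance this
  apply ShortComplex.exact_of_f_is_kernel
  exact KernelFork.IsLimit.ofι' _ _ (fun k hk => by
    refine ⟨pullback.lift k (hT.exact.lift (k ≫ q) (by rwa [Category.assoc]))
      (by rw [ShortComplex.Exact.lift_f]), by simp [pullback.lift_fst, pullback.lift_snd, pullback.lift_fst_assoc, pullback.lift_snd_assoc]⟩)

/-- Adding a biproduct factor to a short exact sequence. -/
lemma sumSES {S : ShortComplex C} (hS : S.ShortExact) (P : C) :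
    (ShortComplex.mk (S.f ≫ biprod.inl) (biprod.map S.g (𝟙 P))
      (by rw [Category.assoc, biprod.inl_map, ← Category.assoc, S.zero, zero_comp])).ShortExact := by
  have := hS.mono_f
  have := hS.epi_g
  have hmono : Mono (S.f ≫ (biprod.inl : S.X₂ ⟶ S.X₂ ⊞ P)) := mono_comp _ _
  refine ShortComplex.ShortExact.mk' ?_ hmono inferInstance
  apply ShortComplex.exact_of_f_is_kernel
  exact KernelFork.IsLimit.ofι' _ _ (fun k hk => by
    have h2 : k ≫ biprod.snd = 0 := by
      have := congrArg (· ≫ (biprod.snd : S.X₃ ⊞ P ⟶ P)) hk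
      simp at this
      simpa using this
    have h1 : (k ≫ biprod.fst) ≫ S.g = 0 := by
      have := congrArg (· ≫ (biprod.fst : S.X₃ ⊞ P ⟶ S.X₃)) hk
      simpa using this
    refine ⟨hS.exact.lift (k ≫ biprod.fst) h1, ?_⟩
    apply biprod.hom_ext
    · simpa using hS.exact.lift_f _ h1
    · simpa using h2.symm)

/-- `kernel f ⊞ kernel g` is a kernel of `biprod.map f g`. -/
noncomputable def kernelBiprodIso {P Q P' Q' : C} (f : P ⟶ Q) (g : P' ⟶ Q') :
    (kernel f ⊞ kernel g) ≅ kernel (biprod.map f g) := by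
  have hzero : biprod.map (kernel.ι f) (kernel.ι g) ≫ biprod.map f g = 0 := by
    apply biprod.hom_ext
    · simp [biprod.map_fst]
    · simp [biprod.map_snd]
  have hlim : IsLimit (KernelFork.ofι _ hzero) := by
    apply KernelFork.IsLimit.ofι'
    intro A k hk
    have h1 : (k ≫ biprod.fst) ≫ f = 0 := by
      have := congrArg (· ≫ (biprod.fst : Q ⊞ Q' ⟶ Q)) hk
      simpa using this
    have h2 : (k ≫ biprod.snd) ≫ g = 0 := by
      have := congrArg (· ≫ (biprod.snd : Q ⊞ Q' ⟶ Q')) hk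
      simpa using this
    refine ⟨biprod.lift (kernel.lift f (k ≫ biprod.fst) h1) (kernel.lift g (k ≫ biprod.snd) h2), ?_⟩
    apply biprod.hom_ext
    · simp [biprod.map_fst]
    · simp [biprod.map_snd]
  exact hlim.conePointUniqueUpToIso (limit.isLimit (parallelPair (biprod.map f g) 0))

section Pseudo

open CategoryTheory.Abelian

attribute [local instance] Pseudoelement.objectToSort Pseudoelement.homToFun

/-- The kernel of a composition of epimorphisms `q : P ⟶ B`, `g : B ⟶ Cc` sits in a
short exact sequence `0 → ker q → ker (q ≫ g) → ker g → 0`. -/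
lemma kernelCompSES {P B Cc : C} (q : P ⟶ B) (g : B ⟶ Cc) [Epi q] [Epi g] :
    (ShortComplex.mk
      (kernel.lift (q ≫ g) (kernel.ι q) (by rw [← Category.assoc, kernel.condition, zero_comp]))
      (kernel.lift g (kernel.ι (q ≫ g) ≫ q) (by rw [Category.assoc, kernel.condition]))
      (by rw [← cancel_mono (kernel.ι g)]; simp)).ShortExact := by
  have hmono : Mono (kernel.lift (q ≫ g) (kernel.ι q)
      (by rw [← Category.assoc, kernel.condition, zero_comp])) :=
    mono_of_mono_fac (kernel.lift_ι _ _ _)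
  have hepi : Epi (kernel.lift g (kernel.ι (q ≫ g) ≫ q) (by rw [Category.assoc, kernel.condition])) := by
    apply Pseudoelement.epi_of_pseudo_surjective
    intro x
    obtain ⟨p, hp⟩ := Pseudoelement.pseudo_surjective_of_epi q ((kernel.ι g) x)
    have hpg : (q ≫ g) p = 0 := by
      rw [Pseudoelement.comp_apply, hp, ← Pseudoelement.comp_apply, kernel.condition,
        Pseudoelement.zero_apply]
    obtain ⟨k, hk⟩ := Pseudoelement.pseudo_exact_of_exact (kernelSES (q ≫ g)).exact p hpg
    refine ⟨k, Pseudoelement.pseudo_injective_of_mono (kernel.ι g) ?_⟩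
    rw [← Pseudoelement.comp_apply, kernel.lift_ι, Pseudoelement.comp_apply, hk, hp]
  refine ShortComplex.ShortExact.mk' ?_ hmono hepi
  apply Pseudoelement.exact_of_pseudo_exact
  intro b hb
  have h1 : q ((kernel.ι (q ≫ g)) b) = 0 := by
    have h2 : (kernel.ι (q ≫ g) ≫ q) b = 0 := by
      have h3 := kernel.lift_ι g (kernel.ι (q ≫ g) ≫ q) (by rw [Category.assoc, kernel.condition])
      rw [← h3, Pseudoelement.comp_apply, hb, Pseudoelement.apply_zero]
    rwa [Pseudoelement.comp_apply] at h2
  obtain ⟨a, ha⟩ := Pseudoelement.pseudo_exact_of_exact (kernelSES q).exact _ h1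
  refine ⟨a, Pseudoelement.pseudo_injective_of_mono (kernel.ι (q ≫ g)) ?_⟩
  have hF : kernel.lift (q ≫ g) (kernel.ι q)
      (by rw [← Category.assoc, kernel.condition, zero_comp]) ≫ kernel.ι (q ≫ g) = kernel.ι q :=
    kernel.lift_ι _ _ _
  rw [← Pseudoelement.comp_apply, hF]
  exact ha

end Pseudo

lemma hasRes_of_iso {Y : Set C} : ∀ {n : ℕ} {M N : C},
    HasResolutionLength Y n M → (N ≅ M) → HasResolutionLength Y n N
  | 0, _, _, ⟨P, hP, ⟨e⟩⟩, e' => ⟨P, hP, ⟨e'.trans e⟩⟩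
  | _+1, _, _, ⟨S, hse, h2, ⟨e⟩, h1⟩, e' => ⟨S, hse, h2, ⟨e.trans e'.symm⟩, h1⟩

lemma hasRes_destruct {Y : Set C} {n : ℕ} {M : C} (h : HasResolutionLength Y (n + 1) M) :
    ∃ (K B : C) (f : K ⟶ B) (g : B ⟶ M) (w : f ≫ g = 0),
      (ShortComplex.mk f g w).ShortExact ∧ B ∈ Y ∧ HasResolutionLength Y n K := by
  obtain ⟨S, hse, h2, ⟨e⟩, h1⟩ := h
  refine ⟨S.X₁, S.X₂, S.f, S.g ≫ e.hom, by rw [← Category.assoc, S.zero, zero_comp], ?_, h2, h1⟩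
  exact ShortComplex.shortExact_of_iso
    (ShortComplex.isoMk (Iso.refl S.X₁) (Iso.refl S.X₂) e (by simp) (by simp)) hse

lemma pdim_le_of_hasRes {Y : Set C} {n : ℕ} {M : C} (h : HasResolutionLength Y n M) :
    pdim Y M ≤ (n : ℕ∞) := sInf_le ⟨n, rfl, h⟩

lemma pdim_le_nat_iff {Y : Set C} {M : C} {n : ℕ} :
    pdim Y M ≤ (n : ℕ∞) ↔ ∃ m ≤ n, HasResolutionLength Y m M := by
  constructor
  · intro hle
    by_contra hc
    push_neg at hc
    have h1 : ((n : ℕ∞) + 1) ≤ pdim Y M := by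
      apply le_sInf
      rintro b ⟨m, rfl, hm⟩
      have h2 : n < m := lt_of_not_ge (fun h' => hc m h' hm)
      exact_mod_cast Nat.succ_le_of_lt h2
    have h3 := le_trans h1 hle
    have h4 : (n : ℕ∞) < (n : ℕ∞) + 1 := (ENat.lt_add_one_iff (by simp)).mpr le_rfl
    exact absurd (lt_of_lt_of_le h4 h3) (lt_irrefl _)
  · rintro ⟨m, hm, h⟩
    exact le_trans (pdim_le_of_hasRes h) (by exact_mod_cast hm)

lemma pdim_le_of_iso {Y : Set C} {M N : C} (e : N ≅ M) : pdim Y N ≤ pdim Y M :=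
  sInf_le_sInf (by rintro b ⟨m, rfl, hm⟩; exact ⟨m, rfl, hasRes_of_iso hm e⟩)

section Resolving

variable {X : Set C}

lemma IsResolving.mem_of_iso (hX : IsResolving X) {M N : C} (h : M ∈ X) (e : N ≅ M) : N ∈ X :=
  hX.summand_mem M h N e.hom e.inv e.hom_inv_id

lemma IsResolving.biprod_mem (hX : IsResolving X) {M N : C} (hM : M ∈ X) (hN : N ∈ X) :
    (M ⊞ N) ∈ X := by
  have hse : (ShortComplex.mk (biprod.inl : M ⟶ _) (biprod.snd : _ ⟶ N) (by simp)).ShortExact :=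
    (ShortComplex.Splitting.ofHasBinaryBiproduct M N).shortExact
  exact (hX.two_of_three _ hse hN).1 hM

lemma hasRes_zero_of_mem {M : C} (h : M ∈ X) : HasResolutionLength X 0 M :=
  ⟨M, h, ⟨Iso.refl M⟩⟩

lemma IsResolving.mem_of_hasRes_zero (hX : IsResolving X) {M : C}
    (h : HasResolutionLength X 0 M) : M ∈ X := by
  obtain ⟨P, hP, ⟨e⟩⟩ := h
  exact hX.mem_of_iso hP e

lemma res_succ_of_ses {S : ShortComplex C} (hse : S.ShortExact) (h2 : S.X₂ ∈ X) {n : ℕ}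
    (h1 : HasResolutionLength X n S.X₁) : HasResolutionLength X (n + 1) S.X₃ :=
  ⟨S, hse, h2, ⟨Iso.refl _⟩, h1⟩

lemma IsResolving.hasRes_succ (hX : IsResolving X) {n : ℕ} {M : C}
    (h : HasResolutionLength X n M) : HasResolutionLength X (n + 1) M := by
  induction n generalizing M with
  | zero =>
    obtain ⟨P, hP, ⟨e⟩⟩ := h
    refine ⟨ShortComplex.mk (0 : (0 : C) ⟶ P) (𝟙 P) (by simp), ?_, hP, ⟨e.symm⟩,
      0, hX.projective_mem 0 inferInstance, ⟨Iso.refl 0⟩⟩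
    exact (ShortComplex.Splitting.ofIsZeroOfIsIso _ (isZero_zero C) inferInstance).shortExact
  | succ n ih =>
    obtain ⟨S, hse, h2, he, h1⟩ := h
    exact ⟨S, hse, h2, he, ih h1⟩

lemma IsResolving.hasRes_mono (hX : IsResolving X) {m n : ℕ} (h : m ≤ n) {M : C}
    (hres : HasResolutionLength X m M) : HasResolutionLength X n M := by
  induction h with
  | refl => exact hres
  | step _ ih => exact hX.hasRes_succ ih

lemma IsResolving.pdim_le_iff (hX : IsResolving X) {M : C} {n : ℕ} :
    pdim X M ≤ (n : ℕ∞) ↔ HasResolutionLength X n M := by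
  rw [pdim_le_nat_iff]
  exact ⟨fun ⟨m, hm, h⟩ => hX.hasRes_mono hm h, fun h => ⟨n, le_refl n, h⟩⟩

end Resolving

section Resolving2

variable {X : Set C}

lemma IsResolving.res_of_sub (hX : IsResolving X) {T : ShortComplex C} (hT : T.ShortExact)
    (hB : T.X₃ ∈ X) {n : ℕ} (hE : HasResolutionLength X n T.X₂) :
    HasResolutionLength X n T.X₁ := by
  cases n with
  | zero => exact hasRes_zero_of_mem ((hX.two_of_three T hT hB).2 (hX.mem_of_hasRes_zero hE))
  | succ n =>
    obtain ⟨K, Q, f, g, w, hse, hQ, h1⟩ := hasRes_destruct hE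
    haveI : Epi g := hse.epi_g
    have ses1 := pullbackSES_left hse T.f
    have ses2 := pullbackSES_quot hT (q := g)
    have hG : (pullback g T.f) ∈ X := (hX.two_of_three _ ses2 hB).2 hQ
    exact res_succ_of_ses ses1 hG h1

lemma IsResolving.hasRes_biprod_right (hX : IsResolving X) {P : C} (hP : P ∈ X) {n : ℕ} {M : C}
    (h : HasResolutionLength X n M) : HasResolutionLength X n (M ⊞ P) := by
  induction n generalizing M with
  | zero => exact hasRes_zero_of_mem (hX.biprod_mem (hX.mem_of_hasRes_zero h) hP)
  | succ n ih =>
    obtain ⟨K, B, f, g, w, hse, hB, h1⟩ := hasRes_destruct h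
    exact res_succ_of_ses (sumSES hse P) (hX.biprod_mem hB hP) h1

lemma IsResolving.syzygy (hX : IsResolving X)
    {K P M : C} {f : K ⟶ P} {g : P ⟶ M} {w : f ≫ g = 0}
    (hT : (ShortComplex.mk f g w).ShortExact) (hP : Projective P) {n : ℕ}
    (hM : HasResolutionLength X (n + 1) M) : HasResolutionLength X n K := by
  obtain ⟨K', B, f', g', w', hse, hB, h1⟩ := hasRes_destruct hM
  haveI : Epi g := hT.epi_g
  haveI := hP
  have ses1 := pullbackSES_left hse (p := g)
  have split := ses1.splittingOfProjective
  have h2 : HasResolutionLength X n (K' ⊞ P) := hX.hasRes_biprod_right (hX.projective_mem P hP) h1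
  have h3 : HasResolutionLength X n (pullback g' g) :=
    hasRes_of_iso h2 split.isoBinaryBiproduct
  have ses2 := pullbackSES_right hse (p := g)
  have h4 : HasResolutionLength X n (kernel g) := hX.res_of_sub ses2 hB h3
  exact hasRes_of_iso h4 (hT.fIsKernel.conePointUniqueUpToIso (limit.isLimit (parallelPair g 0)))

variable [EnoughProjectives C]

lemma IsResolving.res_summand (hX : IsResolving X) :
    ∀ {n : ℕ} {M N : C}, HasResolutionLength X n (M ⊞ N) → HasResolutionLength X n M := by
  intro n
  induction n with
  | zero =>
    intro M N h
    exact hasRes_zero_of_mem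
      (hX.summand_mem _ (hX.mem_of_hasRes_zero h) M biprod.inl biprod.fst biprod.inl_fst)
  | succ n ih =>
    intro M N h
    have h1 : HasResolutionLength X n (kernel (biprod.map (Projective.π M) (Projective.π N))) :=
      hX.syzygy (kernelSES (biprod.map (Projective.π M) (Projective.π N))) inferInstance h
    have h2 := hasRes_of_iso h1 (kernelBiprodIso (Projective.π M) (Projective.π N))
    have h3 := ih h2
    exact res_succ_of_ses (kernelSES (Projective.π M))
      (hX.projective_mem _ inferInstance) h3

lemma IsResolving.res_middle_and_sub (hX : IsResolving X) :
    ∀ n : ℕ,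
      (∀ {T : ShortComplex C}, T.ShortExact → HasResolutionLength X n T.X₁ →
        HasResolutionLength X n T.X₃ → HasResolutionLength X n T.X₂) ∧
      (∀ {T : ShortComplex C}, T.ShortExact → HasResolutionLength X n T.X₂ →
        HasResolutionLength X (n + 1) T.X₃ → HasResolutionLength X n T.X₁) := by
  have H3of : ∀ n : ℕ,
      (∀ {T : ShortComplex C}, T.ShortExact → HasResolutionLength X n T.X₁ →
        HasResolutionLength X n T.X₃ → HasResolutionLength X n T.X₂) →
      (∀ {T : ShortComplex C}, T.ShortExact → HasResolutionLength X n T.X₂ →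
        HasResolutionLength X (n + 1) T.X₃ → HasResolutionLength X n T.X₁) := by
    intro n h1 T hT hB hC
    haveI := hT.epi_g
    have hK : HasResolutionLength X n (kernel (Projective.π T.X₃)) :=
      hX.syzygy (kernelSES (Projective.π T.X₃)) inferInstance hC
    have ses1 := pullbackSES_left hT (Projective.π T.X₃)
    have ses2 := pullbackSES_right hT (Projective.π T.X₃)
    have hE : HasResolutionLength X n (pullback T.g (Projective.π T.X₃)) := h1 ses2 hK hB
    have split := ses1.splittingOfProjective
    have h4 : HasResolutionLength X n (T.X₁ ⊞ (Projective.over T.X₃)) :=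
      hasRes_of_iso hE split.isoBinaryBiproduct.symm
    exact hX.res_summand h4
  intro n
  induction n with
  | zero =>
    have h1 : ∀ {T : ShortComplex C}, T.ShortExact → HasResolutionLength X 0 T.X₁ →
        HasResolutionLength X 0 T.X₃ → HasResolutionLength X 0 T.X₂ := by
      intro T hT hA hC
      exact hasRes_zero_of_mem ((hX.two_of_three T hT (hX.mem_of_hasRes_zero hC)).1
        (hX.mem_of_hasRes_zero hA))
    exact ⟨h1, H3of 0 h1⟩
  | succ n ih =>
    have h1 : ∀ {T : ShortComplex C}, T.ShortExact → HasResolutionLength X (n + 1) T.X₁ →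
        HasResolutionLength X (n + 1) T.X₃ → HasResolutionLength X (n + 1) T.X₂ := by
      intro T hT hA hC
      haveI := hT.epi_g
      haveI : Epi (Projective.π T.X₂ ≫ T.g) := epi_comp _ _
      have hK3 : HasResolutionLength X n (kernel (Projective.π T.X₂ ≫ T.g)) :=
        hX.syzygy (kernelSES (Projective.π T.X₂ ≫ T.g)) inferInstance hC
      have hA' : HasResolutionLength X (n + 1) (kernel T.g) :=
        hasRes_of_iso hA ((limit.isLimit (parallelPair T.g 0)).conePointUniqueUpToIso hT.fIsKernel)
      have hK2 : HasResolutionLength X n (kernel (Projective.π T.X₂)) :=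
        ih.2 (kernelCompSES (Projective.π T.X₂) T.g) hK3 hA'
      exact res_succ_of_ses (kernelSES (Projective.π T.X₂))
        (hX.projective_mem _ inferInstance) hK2
    exact ⟨h1, H3of (n + 1) h1⟩

lemma IsResolving.res_middle (hX : IsResolving X) {T : ShortComplex C} (hT : T.ShortExact)
    {n : ℕ} (hA : HasResolutionLength X n T.X₁) (hC : HasResolutionLength X n T.X₃) :
    HasResolutionLength X n T.X₂ :=
  (hX.res_middle_and_sub n).1 hT hA hC

lemma IsResolving.res_sub (hX : IsResolving X) {T : ShortComplex C} (hT : T.ShortExact)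
    {n : ℕ} (hB : HasResolutionLength X n T.X₂) (hC : HasResolutionLength X (n + 1) T.X₃) :
    HasResolutionLength X n T.X₁ :=
  (hX.res_middle_and_sub n).2 hT hB hC

lemma IsResolving.res_quot (hX : IsResolving X) {T : ShortComplex C} (hT : T.ShortExact)
    {n : ℕ} (hA : HasResolutionLength X n T.X₁) (hB : HasResolutionLength X (n + 1) T.X₂) :
    HasResolutionLength X (n + 1) T.X₃ := by
  haveI := hT.epi_g
  haveI : Epi (Projective.π T.X₂ ≫ T.g) := epi_comp _ _
  have hK2 : HasResolutionLength X n (kernel (Projective.π T.X₂)) :=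
    hX.syzygy (kernelSES (Projective.π T.X₂)) inferInstance hB
  have hA' : HasResolutionLength X n (kernel T.g) :=
    hasRes_of_iso hA ((limit.isLimit (parallelPair T.g 0)).conePointUniqueUpToIso hT.fIsKernel)
  have hK3 : HasResolutionLength X n (kernel (Projective.π T.X₂ ≫ T.g)) :=
    hX.res_middle (kernelCompSES (Projective.π T.X₂) T.g) hK2 hA'
  exact res_succ_of_ses (kernelSES (Projective.π T.X₂ ≫ T.g))
    (hX.projective_mem _ inferInstance) hK3

end Resolving2

section Recollement

variable {A' A A'' : Type*} [Category A'] [Category A] [Category A'']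
    [Abelian A'] [Abelian A] [Abelian A''] [EnoughProjectives A]
    (R : Recollement A' A A'')

lemma key1 (X : Set A) (hX : IsResolving X)
    (h : ∀ M ∈ X, R.jShriek.obj (R.jStar.obj M) ∈ X)
    (g : ℕ) (hg : ∀ a' : A', HasResolutionLength X g (R.iPush.obj a')) :
    ∀ (n : ℕ) (a'' : A''),
      HasResolutionLength {Y : A'' | ∃ M ∈ X, Nonempty (Y ≅ R.jStar.obj M)} n a'' →
      HasResolutionLength X (n + g + 1) (R.jShriek.obj a'') := by
  haveI := R.jShriek_additive
  haveI := R.jStar_additive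
  haveI := R.jShriek_full
  haveI := R.jShriek_faithful
  haveI : R.jShriek.IsLeftAdjoint := R.adj₃.isLeftAdjoint
  haveI : R.jStar.IsRightAdjoint := R.adj₃.isRightAdjoint
  haveI := R.adj₃.leftAdjoint_preservesColimits
  intro n
  induction n with
  | zero =>
    intro a'' h0
    obtain ⟨P, hP, ⟨e⟩⟩ := h0
    obtain ⟨M, hM, ⟨eP⟩⟩ := hP
    have hmem : R.jShriek.obj a'' ∈ X :=
      hX.mem_of_iso (h M hM) (R.jShriek.mapIso (e.trans eP))
    exact hX.hasRes_mono (Nat.zero_le _) (hasRes_zero_of_mem hmem)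
  | succ n ih =>
    intro a'' hres
    obtain ⟨K, Y, f, q, w, hse, hY, h1⟩ := hasRes_destruct hres
    haveI : Epi q := hse.epi_g
    haveI : Epi (R.jShriek.map q) := inferInstance
    -- exactness of the image of the sequence under jShriek
    have hSmap : ((ShortComplex.mk f q w).map R.jShriek).Exact :=
      hse.exact.map_of_epi_of_preservesCokernel R.jShriek inferInstance inferInstance
    have hw : R.jShriek.map f ≫ R.jShriek.map q = 0 := by
      rw [← R.jShriek.map_comp, w, R.jShriek.map_zero]
    have φdef : kernel.lift (R.jShriek.map q) (R.jShriek.map f) hw =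
        kernel.lift ((ShortComplex.mk f q w).map R.jShriek).g
          ((ShortComplex.mk f q w).map R.jShriek).f
          ((ShortComplex.mk f q w).map R.jShriek).zero := rfl
    haveI hφepi : Epi (kernel.lift (R.jShriek.map q) (R.jShriek.map f) hw) := by
      rw [φdef]
      exact (((ShortComplex.mk f q w).map R.jShriek).exact_iff_epi_kernel_lift).1 hSmap
    set φ := kernel.lift (R.jShriek.map q) (R.jShriek.map f) hw with hφ
    have ses2 := kernelSES (R.jShriek.map q)
    have ses1 := kernelSES φ
    -- the kernel of φ is killed by jStar
    have hmonoFf : Mono (R.jStar.map (R.jShriek.map f)) := by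
      haveI := hse.mono_f
      have hn := R.adj₃.unit.naturality f
      have heq : R.jStar.map (R.jShriek.map f) =
          inv (R.adj₃.unit.app K) ≫ (f ≫ R.adj₃.unit.app Y) := by
        rw [IsIso.eq_inv_comp]
        simpa using hn.symm
      rw [heq]
      infer_instance
    have hmonoφ : Mono (R.jStar.map φ) := by
      have : R.jStar.map φ ≫ R.jStar.map (kernel.ι (R.jShriek.map q)) =
          R.jStar.map (R.jShriek.map f) := by
        rw [← R.jStar.map_comp, kernel.lift_ι]
      exact mono_of_mono_fac this
    have hzero : IsZero (R.jStar.obj (kernel φ)) := by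
      have h0 : R.jStar.map (kernel.ι φ) = 0 := by
        rw [← cancel_mono (R.jStar.map φ), ← R.jStar.map_comp, kernel.condition,
          R.jStar.map_zero, zero_comp]
      exact IsZero.of_mono_eq_zero (R.jStar.map (kernel.ι φ)) h0
    obtain ⟨a', ⟨ea⟩⟩ := (R.essImage_iPush (kernel φ)).2 hzero
    have hResW : HasResolutionLength X (n + g) (kernel φ) :=
      hX.hasRes_mono (by omega) (hasRes_of_iso (hg a') ea.symm)
    have hResJK : HasResolutionLength X (n + g + 1) (R.jShriek.obj K) := ih K h1
    have hResZ : HasResolutionLength X (n + g + 1) (kernel (R.jShriek.map q)) :=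
      hX.res_quot ses1 hResW hResJK
    have hYmem : R.jShriek.obj Y ∈ X := by
      obtain ⟨M, hM, ⟨eY⟩⟩ := hY
      exact hX.mem_of_iso (h M hM) (R.jShriek.mapIso eY)
    have hfin := res_succ_of_ses ses2 hYmem hResZ
    have harith : n + 1 + g + 1 = n + g + 1 + 1 := by omega
    rw [harith]
    exact hfin

end Recollement

end Aux

end Paper

/-- In a recollement `R(A', A, A'')` with `X` resolving in `A`, `j_*`
exact and `j_! j^* X ⊆ X`:
(1) for every `A''`, `pd_X (j_! A'') ≤ pd_{j^*X} A'' + gl.dim_X A' + 1`, where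
`gl.dim_X A' = sup { pd_X (i_* a') }`;
(2) `gl.dim_X A ≤ gl.dim_X A' + gl.dim_{j^*X} A'' + 1`. -/
theorem Paper.statement16
    {A' A A'' : Type*} [Category A'] [Category A] [Category A'']
    [Abelian A'] [Abelian A] [Abelian A'']
    [EnoughProjectives A'] [EnoughInjectives A']
    [EnoughProjectives A] [EnoughInjectives A]
    [EnoughProjectives A''] [EnoughInjectives A'']
    (R : Recollement A' A A'')
    (X : Set A) (hX : IsResolving X)
    [PreservesFiniteLimits R.jPush] [PreservesFiniteColimits R.jPush]
    (h : ∀ M ∈ X, R.jShriek.obj (R.jStar.obj M) ∈ X) :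
    (∀ a'' : A'', pdim X (R.jShriek.obj a'') ≤
        pdim {Y : A'' | ∃ M ∈ X, Nonempty (Y ≅ R.jStar.obj M)} a''
          + (⨆ a' : A', pdim X (R.iPush.obj a')) + 1) ∧
    gldim X ≤ (⨆ a' : A', pdim X (R.iPush.obj a'))
        + gldim {Y : A'' | ∃ M ∈ X, Nonempty (Y ≅ R.jStar.obj M)} + 1 := by
  classical
  haveI := R.jShriek_additive
  haveI := R.jStar_additive
  haveI := R.jShriek_full
  haveI := R.jShriek_faithful
  haveI : R.jShriek.IsLeftAdjoint := R.adj₃.isLeftAdjoint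
  haveI : R.jStar.IsRightAdjoint := R.adj₃.isRightAdjoint
  haveI : R.jStar.IsLeftAdjoint := R.adj₄.isLeftAdjoint
  constructor
  · intro a''
    by_cases hGtop : (⨆ a' : A', pdim X (R.iPush.obj a')) = ⊤
    · rw [hGtop]
      have : pdim {Y : A'' | ∃ M ∈ X, Nonempty (Y ≅ R.jStar.obj M)} a'' + ⊤ + 1 = ⊤ := by
        rw [add_top, top_add]
      rw [this]
      exact le_top
    obtain ⟨g, hGg⟩ := ENat.canLift.prf _ hGtop
    by_cases hDtop : pdim {Y : A'' | ∃ M ∈ X, Nonempty (Y ≅ R.jStar.obj M)} a'' = ⊤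
    · rw [hDtop, top_add, top_add]
      exact le_top
    obtain ⟨d, hDd⟩ := ENat.canLift.prf _ hDtop
    have hg : ∀ a' : A', HasResolutionLength X g (R.iPush.obj a') := fun a' =>
      hX.pdim_le_iff.1 (le_trans (le_iSup (fun a' : A' => pdim X (R.iPush.obj a')) a')
        hGg.ge)
    obtain ⟨m, hm, hres⟩ := pdim_le_nat_iff.1 hDd.ge
    have hres2 := key1 R X hX h g hg m a'' hres
    rw [← hGg, ← hDd]
    calc pdim X (R.jShriek.obj a'') ≤ ((m + g + 1 : ℕ) : ℕ∞) := pdim_le_of_hasRes hres2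
      _ ≤ ((d + g + 1 : ℕ) : ℕ∞) := by
          exact_mod_cast Nat.add_le_add_right (Nat.add_le_add_right hm g) 1
      _ = (d : ℕ∞) + (g : ℕ∞) + 1 := by push_cast; ring
  · by_cases hGtop : (⨆ a' : A', pdim X (R.iPush.obj a')) = ⊤
    · rw [hGtop, top_add, top_add]
      exact le_top
    obtain ⟨g, hGg⟩ := ENat.canLift.prf _ hGtop
    by_cases hDtop : gldim {Y : A'' | ∃ M ∈ X, Nonempty (Y ≅ R.jStar.obj M)} = ⊤
    · rw [hDtop]
      have : (⨆ a' : A', pdim X (R.iPush.obj a')) + (⊤ : ℕ∞) + 1 = ⊤ := by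
        rw [add_top, top_add]
      rw [this]
      exact le_top
    obtain ⟨d, hDd⟩ := ENat.canLift.prf _ hDtop
    have hg : ∀ a' : A', HasResolutionLength X g (R.iPush.obj a') := fun a' =>
      hX.pdim_le_iff.1 (le_trans (le_iSup (fun a' : A' => pdim X (R.iPush.obj a')) a')
        hGg.ge)
    apply iSup_le
    intro M
    -- bound for the object M of A
    have hpd : pdim {Y : A'' | ∃ M ∈ X, Nonempty (Y ≅ R.jStar.obj M)} (R.jStar.obj M)
        ≤ (d : ℕ∞) := by
      rw [hDd]
      exact le_iSup (fun N : A'' =>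
        pdim {Y : A'' | ∃ M ∈ X, Nonempty (Y ≅ R.jStar.obj M)} N) (R.jStar.obj M)
    obtain ⟨m, hm, hres⟩ := pdim_le_nat_iff.1 hpd
    have hFGM : HasResolutionLength X (d + g + 1) (R.jShriek.obj (R.jStar.obj M)) :=
      hX.hasRes_mono (by omega) (key1 R X hX h g hg m (R.jStar.obj M) hres)
    set ε := R.adj₃.counit.app M with hε
    have hiso : IsIso (R.jStar.map ε) := by
      have tri := R.adj₃.right_triangle_components M
      haveI : IsIso (R.adj₃.unit.app (R.jStar.obj M) ≫ R.jStar.map ε) := by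
        rw [tri]; exact IsIso.id _
      exact IsIso.of_isIso_comp_left (R.adj₃.unit.app (R.jStar.obj M)) (R.jStar.map ε)
    have hexact : (ShortComplex.mk ε (cokernel.π ε) (cokernel.condition ε)).Exact :=
      ShortComplex.exact_of_g_is_cokernel _ (cokernelIsCokernel ε)
    haveI hκepi : Epi (kernel.lift (cokernel.π ε) ε (cokernel.condition ε)) :=
      ((ShortComplex.mk ε (cokernel.π ε) (cokernel.condition ε)).exact_iff_epi_kernel_lift).1
        hexact
    set κ := kernel.lift (cokernel.π ε) ε (cokernel.condition ε) with hκ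
    have ses1 := kernelSES κ
    have ses2 := kernelSES (cokernel.π ε)
    -- the cokernel of ε is killed by jStar
    have hz2 : IsZero (R.jStar.obj (cokernel ε)) := by
      haveI : Epi (R.jStar.map ε) := by exact IsIso.epi_of_iso _
      have hc0 : R.jStar.map (cokernel.π ε) = 0 := by
        rw [← cancel_epi (R.jStar.map ε), ← R.jStar.map_comp, cokernel.condition,
          R.jStar.map_zero, comp_zero]
      exact IsZero.of_epi_eq_zero (R.jStar.map (cokernel.π ε)) hc0
    -- the kernel of κ is killed by jStar
    have hz1 : IsZero (R.jStar.obj (kernel κ)) := by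
      have hmonoκ : Mono (R.jStar.map κ) := by
        haveI : Mono (R.jStar.map ε) := by exact IsIso.mono_of_iso _
        have hfac : R.jStar.map κ ≫ R.jStar.map (kernel.ι (cokernel.π ε)) =
            R.jStar.map ε := by
          rw [← R.jStar.map_comp, hκ, kernel.lift_ι]
        exact mono_of_mono_fac hfac
      have h0 : R.jStar.map (kernel.ι κ) = 0 := by
        rw [← cancel_mono (R.jStar.map κ), ← R.jStar.map_comp, kernel.condition,
          R.jStar.map_zero, zero_comp]
      exact IsZero.of_mono_eq_zero (R.jStar.map (kernel.ι κ)) h0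
    obtain ⟨a₁, ⟨e₁⟩⟩ := (R.essImage_iPush (kernel κ)).2 hz1
    obtain ⟨a₂, ⟨e₂⟩⟩ := (R.essImage_iPush (cokernel ε)).2 hz2
    have hResW1 : HasResolutionLength X (d + g) (kernel κ) :=
      hX.hasRes_mono (by omega) (hasRes_of_iso (hg a₁) e₁.symm)
    have hResW2 : HasResolutionLength X (d + g + 1) (cokernel ε) :=
      hX.hasRes_mono (by omega) (hasRes_of_iso (hg a₂) e₂.symm)
    have hI : HasResolutionLength X (d + g + 1) (kernel (cokernel.π ε)) :=
      hX.res_quot ses1 hResW1 hFGM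
    have hMres : HasResolutionLength X (d + g + 1) M :=
      hX.res_middle ses2 hI hResW2
    rw [← hGg, ← hDd]
    calc pdim X M ≤ ((d + g + 1 : ℕ) : ℕ∞) := pdim_le_of_hasRes hMres
      _ = (g : ℕ∞) + (d : ℕ∞) + 1 := by push_cast; ring
end

section
/- Let R(A', A, A'') be a recollement of abelian categories with functors i^*, i_*, i^!, j_!, j^*, j_*, and let X be a resolving subcategory of A. If i_*(i^*(X)) ⊆ X, then gl.dim_X(A') ≤ gl.dim_{i^*X}(A'), i.e., sup{pd_X(i_*(A')) : A' ∈ A'} ≤ sup{pd_{i^*X}(A') : A' ∈ A'} (in ℕ ∪ {∞}). -/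
open CategoryTheory CategoryTheory.Limits

namespace Paper

lemma IsResolving.iso_mem {C : Type*} [Category C] [Abelian C] {X : Set C}
    (hX : IsResolving X) {M N : C} (hM : M ∈ X) (e : N ≅ M) : N ∈ X :=
  hX.summand_mem M hM N e.hom e.inv e.hom_inv_id

lemma hrl_push {A' A A'' : Type*} [Category A'] [Category A] [Category A'']
    [Abelian A'] [Abelian A] [Abelian A'']
    (R : Recollement A' A A'')
    (X : Set A) (hX : IsResolving X)
    (h : ∀ M ∈ X, R.iPush.obj (R.iStar.obj M) ∈ X) :
    ∀ (m : ℕ) (a' : A'),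
      HasResolutionLength {Y : A' | ∃ M ∈ X, Nonempty (Y ≅ R.iStar.obj M)} m a' →
      HasResolutionLength X m (R.iPush.obj a') := by
  have : R.iPush.Additive := R.iPush_additive
  have h1 : PreservesFiniteLimits R.iPush :=
    (R.adj₁.rightAdjoint_preservesLimits : PreservesLimitsOfSize.{0,0} _).preservesFiniteLimits
  have h2 : PreservesFiniteColimits R.iPush :=
    (R.adj₂.leftAdjoint_preservesColimits : PreservesColimitsOfSize.{0,0} _).preservesFiniteColimits
  intro m
  induction m with
  | zero =>
    rintro a' ⟨P, ⟨M, hM, ⟨e⟩⟩, ⟨e'⟩⟩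
    exact ⟨R.iPush.obj (R.iStar.obj M), h M hM,
      ⟨R.iPush.mapIso (e' ≪≫ e)⟩⟩
  | succ n ih =>
    rintro a' ⟨S, hSE, ⟨M, hM, ⟨e⟩⟩, ⟨e'⟩, hrest⟩
    refine ⟨S.map R.iPush, hSE.map_of_exact R.iPush, ?_, ⟨R.iPush.mapIso e'⟩, ih _ hrest⟩
    exact hX.iso_mem (h M hM) (R.iPush.mapIso e)

end Paper

/-- In a recollement `R(A', A, A'')` with `X` resolving in `A` and
`i_* i^* X ⊆ X`, one has `gl.dim_X A' ≤ gl.dim_{i^*X} A'`, i.e.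
`sup { pd_X (i_* a') } ≤ sup { pd_{i^*X} a' }`. -/
theorem Paper.statement17
    {A' A A'' : Type*} [Category A'] [Category A] [Category A'']
    [Abelian A'] [Abelian A] [Abelian A'']
    [EnoughProjectives A'] [EnoughInjectives A']
    [EnoughProjectives A] [EnoughInjectives A]
    [EnoughProjectives A''] [EnoughInjectives A'']
    (R : Recollement A' A A'')
    (X : Set A) (hX : IsResolving X)
    (h : ∀ M ∈ X, R.iPush.obj (R.iStar.obj M) ∈ X) :
    (⨆ a' : A', pdim X (R.iPush.obj a')) ≤
      ⨆ a' : A', pdim {Y : A' | ∃ M ∈ X, Nonempty (Y ≅ R.iStar.obj M)} a' := by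
  refine iSup_mono fun a' => ?_
  refine le_sInf fun n hn => ?_
  obtain ⟨m, rfl, hm⟩ := hn
  exact sInf_le ⟨m, rfl, hrl_push R X hX h m a' hm⟩
end
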